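/- arXiv:0807.2941 — 2 statements merged into one kernel-verified Lean document; each statement's English description precedes it below -/
import Mathlib

section
/- For the Quinlan–Tremaine base method (coefficients as given), the error coefficients C_q = (1/q!) sum_{j=0}^{10} j^q a_j - (1/(q-2)!) sum_{j=0}^{10} j^{q-2} b_j vanish for all q from 0 up to 11, and C_12 = 52559/912384; hence the method has algebraic order 10. -/
def qtA : ℕ → ℚ
  | 0 => 1 | 1 => -1 | 2 => 1 | 3 => -1 | 4 => 1 | 5 => -2
  | 6 => 1 | 7 => -1 | 8 => 1 | 9 => -1 | 10 => 1 | _ => 0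

def qtB : ℕ → ℚ
  | 1 => 399187/241920 | 2 => -17327/8640 | 3 => 597859/60480 | 4 => -704183/60480
  | 5 => 465133/24192
  | 6 => -704183/60480 | 7 => 597859/60480 | 8 => -17327/8640 | 9 => 399187/241920
  | _ => 0

/-- The error coefficients `C_q` of the Quinlan–Tremaine method. -/
def qtC : ℕ → ℚ
  | 0 => ∑ j ∈ Finset.range 11, qtA j
  | 1 => ∑ j ∈ Finset.range 11, (j : ℚ) * qtA j
  | (q + 2) =>
      (1 / ((q + 2).factorial : ℚ)) * ∑ j ∈ Finset.range 11, (j : ℚ) ^ (q + 2) * qtA j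
        - (1 / (q.factorial : ℚ)) * ∑ j ∈ Finset.range 11, (j : ℚ) ^ q * qtB j

theorem qtC_eq_zero_of_le_eleven : ∀ q ≤ 11, qtC q = 0 := by
  intro q hq
  interval_cases q <;> norm_num [qtC, qtA, qtB, Finset.sum_range_succ, Nat.factorial]

theorem qtC_twelve : qtC 12 = 52559 / 912384 := by
  norm_num [qtC, qtA, qtB, Finset.sum_range_succ, Nat.factorial]

/-- The Quinlan–Tremaine method has `C_q = 0` for `0 ≤ q ≤ 11` and
`C_12 = 52559/912384`, hence it has algebraic order 10. -/
theorem stmt_2 : (∀ q ≤ 11, qtC q = 0) ∧ qtC 12 = 52559/912384 :=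
  ⟨qtC_eq_zero_of_le_eleven, qtC_twelve⟩
end

section
/- If z = e^{iλ(s)} with λ real satisfies the characteristic equation of a symmetric method applied to y'' = -ω²y, and the phase lag is PL(s) = s - λ(s) = c s^{q+2} + O(s^{q+4}), then for the classical Quinlan–Tremaine method the leading phase-lag satisfies: the numerator function Φ(s) = 2 sum_{j=1}^{5} A_j(s²) cos(js) + A_0(s²) has Taylor expansion Φ(s) = C s^{12} + O(s^{14}) at s = 0 for some nonzero constant C, where A_j(s²) = a_{5-j} + s² b_{5-j} with the classical coefficients. -/
/-!
Near `s = 0` each `cos (j s)` agrees with its Taylor polynomial of degree 12 up to `O(s¹⁴)`,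
by the remainder bound for the exponential series applied to `exp (i j s)`. Replacing the
cosines in `Φ` by these polynomials leaves an explicit polynomial in `s`: the order conditions
of the method make its coefficients of `s⁰, …, s¹⁰` cancel, and its `s¹²` coefficient is
`C = 52559 / 912384 ≠ 0`.
-/

open Real Filter Asymptotics

/-- The phase-lag numerator `Φ(s) = 2 ∑_{j=1}^{5} A_j(s²) cos(js) + A_0(s²)` of the
classical Quinlan–Tremaine method, with `A_j(s²) = a_{5-j} + s² b_{5-j}`. -/
noncomputable def qtPhi (s : ℝ) : ℝ :=
  2 * ((1 + s ^ 2 * (-704183 / 60480)) * Real.cos s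
      + (-1 + s ^ 2 * (597859 / 60480)) * Real.cos (2 * s)
      + (1 + s ^ 2 * (-17327 / 8640)) * Real.cos (3 * s)
      + (-1 + s ^ 2 * (399187 / 241920)) * Real.cos (4 * s)
      + (1 + s ^ 2 * 0) * Real.cos (5 * s))
    + (-2 + s ^ 2 * (465133 / 24192))

open Finset Nat Topology

noncomputable def cosTaylor (n : ℕ) (x : ℝ) : ℝ :=
  ∑ k ∈ range n, (-1) ^ k * x ^ (2 * k) / (2 * k)!

open Complex in
lemma re_sum_range_two_mul_pow_mul_I_div_factorial (x : ℝ) (n : ℕ) :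
    (∑ m ∈ range (2 * n), ((x : ℂ) * I) ^ m / m !).re = cosTaylor n x := by
  induction n with
  | zero => simp [cosTaylor]
  | succ n ih =>
    have heven : ((x : ℂ) * I) ^ (2 * n) = (((-1) ^ n * x ^ (2 * n) : ℝ) : ℂ) := by
      push_cast; rw [mul_pow, pow_mul I, I_sq]; ring
    rw [show 2 * (n + 1) = 2 * n + 1 + 1 by ring, sum_range_succ, sum_range_succ, add_re, add_re,
      ih, cosTaylor, cosTaylor, sum_range_succ, pow_succ, heven]
    simp only [div_natCast_re, ofReal_re, mul_re, I_re, ofReal_im, I_im]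
    simp

open Complex in
lemma abs_cos_sub_cosTaylor_le {x : ℝ} (hx : |x| ≤ 1) {n : ℕ} (hn : 0 < n) :
    |Real.cos x - cosTaylor n x| ≤ (2 * n + 1) * ((2 * n)! * (2 * n) : ℝ)⁻¹ * |x| ^ (2 * n) := by
  have hxI : ‖(x : ℂ) * I‖ = |x| := by simp
  rw [← re_sum_range_two_mul_pow_mul_I_div_factorial, ← exp_ofReal_mul_I_re, ← sub_re, ← hxI]
  refine (abs_re_le_norm _).trans ?_
  simpa [mul_comm] using Complex.exp_bound (hxI.trans_le hx) (by omega : 0 < 2 * n)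

lemma cos_sub_cosTaylor_isBigO (n : ℕ) :
    (fun x => Real.cos x - cosTaylor n x) =O[𝓝 0] fun x => x ^ (2 * n) := by
  rcases Nat.eq_zero_or_pos n with rfl | hn
  · simpa [cosTaylor] using (continuous_cos.tendsto 0).isBigO_one ℝ
  refine IsBigO.of_bound ((2 * n + 1) * ((2 * n)! * (2 * n) : ℝ)⁻¹) ?_
  filter_upwards [Metric.closedBall_mem_nhds (0 : ℝ) one_pos] with x hx
  rw [norm_pow, Real.norm_eq_abs, Real.norm_eq_abs]
  exact abs_cos_sub_cosTaylor_le (by simpa using hx) hn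

lemma cos_mul_sub_cosTaylor_isBigO (c : ℝ) (n : ℕ) :
    (fun x => Real.cos (c * x) - cosTaylor n (c * x)) =O[𝓝 0] fun x => x ^ (2 * n) := by
  have hc : Tendsto (c * ·) (𝓝 0) (𝓝 0) := by
    simpa using (continuous_const_mul c).tendsto 0
  have hpow : (fun x => (c * x) ^ (2 * n)) =O[𝓝 0] fun x => x ^ (2 * n) := by
    simpa [mul_pow] using isBigO_const_mul_self (c ^ (2 * n)) (fun x : ℝ => x ^ (2 * n)) (𝓝 0)
  exact ((cos_sub_cosTaylor_isBigO n).comp_tendsto hc).trans hpow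

lemma affine_sq_mul_isBigO {g h : ℝ → ℝ} (a b : ℝ) (hg : g =O[𝓝 0] h) :
    (fun s => (a + s ^ 2 * b) * g s) =O[𝓝 0] h := by
  have hf : Continuous fun s : ℝ => a + s ^ 2 * b := by fun_prop
  simpa using ((hf.tendsto 0).isBigO_one ℝ).mul hg

/-- The phase-lag numerator of the classical Quinlan–Tremaine method has Taylor
expansion `Φ(s) = C s¹² + O(s¹⁴)` at `s = 0` for some nonzero constant `C`. -/
theorem stmt_18 :
    ∃ C : ℝ, C ≠ 0 ∧
      (fun s : ℝ => qtPhi s - C * s ^ 12) =O[nhds (0 : ℝ)] fun s : ℝ => s ^ 14 := by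
  refine ⟨52559 / 912384, by norm_num, ?_⟩
  have hΦ : (fun s : ℝ => qtPhi s - 52559 / 912384 * s ^ 12) = fun s =>
      2 * ((1 + s ^ 2 * (-704183 / 60480)) * (Real.cos (1 * s) - cosTaylor 7 (1 * s))
        + (-1 + s ^ 2 * (597859 / 60480)) * (Real.cos (2 * s) - cosTaylor 7 (2 * s))
        + (1 + s ^ 2 * (-17327 / 8640)) * (Real.cos (3 * s) - cosTaylor 7 (3 * s))
        + (-1 + s ^ 2 * (399187 / 241920)) * (Real.cos (4 * s) - cosTaylor 7 (4 * s))
        + (1 + s ^ 2 * 0) * (Real.cos (5 * s) - cosTaylor 7 (5 * s)))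
      + 746436023 / 6706022400 * s ^ 14 := by
    funext s
    simp only [qtPhi, cosTaylor, sum_range_succ, sum_range_zero, one_mul]
    norm_num [Nat.factorial]
    ring
  have term (a b c : ℝ) := affine_sq_mul_isBigO a b (cos_mul_sub_cosTaylor_isBigO c 7)
  rw [hΦ]
  exact ((((((term _ _ 1).add (term _ _ 2)).add (term _ _ 3)).add (term _ _ 4)).add
    (term _ _ 5)).const_mul_left 2).add (isBigO_const_mul_self _ _ _)
end
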